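/- (Theorem 1, necessity.) Let g_1,…,g_d be a C^{1+ε} Cantor system on [0,1] with scaling function S. Then S is C^ε with respect to the metric ρ_S: there exists K > 0 such that for all j ≠ j' in Σ_d^dual, |S(j) − S(j')|_∞ ≤ K · ρ_S(j,j')^ε (when ε = 1 this is a Lipschitz condition). -/

import Mathlib

open Set Filter

noncomputable section

/-- The unit interval `[0,1] ⊆ ℝ`. -/
abbrev I01 : Set ℝ := Set.Icc (0:ℝ) 1

/-- `ψ` satisfies an `ε`-Hölder bound with constant `H` on `[0,1]`. -/
def HolderBoundOn01 (ε H : ℝ) (ψ : ℝ → ℝ) : Prop :=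
  ∀ x ∈ I01, ∀ y ∈ I01, |ψ x - ψ y| ≤ H * |x - y| ^ ε

/-- A `C^{k+ε}` Cantor system on `[0,1]` with `d` branches: each branch `g i` is a
`C^k` increasing contraction of `[0,1]` with `ε`-Hölder `k`-th derivative, the images
`g i ([0,1])` are disjoint closed intervals in increasing order, `g 0 0 = 0` and
`g (d-1) 1 = 1`. -/
structure IsCantorSystem {d : ℕ} (k : ℕ) (ε : ℝ) (g : Fin d → ℝ → ℝ) : Prop where
  maps : ∀ i, Set.MapsTo (g i) I01 I01
  smooth : ∀ i, ContDiffOn ℝ k (g i) I01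
  holder : ∀ i, ∃ H > 0, HolderBoundOn01 ε H (iteratedDerivWithin k (g i) I01)
  deriv_pos : ∀ i, ∀ x ∈ I01, 0 < derivWithin (g i) I01 x
  deriv_lt_one : ∀ i, ∀ x ∈ I01, derivWithin (g i) I01 x < 1
  ordered : ∀ i j : Fin d, i < j → g i 1 < g j 0
  first : ∀ i : Fin d, (i : ℕ) = 0 → g i 0 = 0
  last : ∀ i : Fin d, (i : ℕ) = d - 1 → g i 1 = 1

/-- For a finite word `w = [w₁,…,wₙ]`, `wordMap g w = g_{wₙ} ∘ ⋯ ∘ g_{w₁}` (i.e. `G_w`). -/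
def wordMap {d : ℕ} (g : Fin d → ℝ → ℝ) : List (Fin d) → ℝ → ℝ
  | [] => id
  | i :: w => fun x => wordMap g w (g i x)

/-- `|I_w|`, the length of the interval `I_w = G_w([0,1]) = [G_w 0, G_w 1]`. -/
def wordLen {d : ℕ} (g : Fin d → ℝ → ℝ) (w : List (Fin d)) : ℝ :=
  wordMap g w 1 - wordMap g w 0

/-- The scaling data of the word `w`: the first `d` coordinates are the ratios
`|I_{i·w}|/|I_w|`, the last `d-1` coordinates are the `d-1` gap lengths between the
consecutive children `I_{1·w},…,I_{d·w}` divided by `|I_w|`. -/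
def scalingData {d : ℕ} (g : Fin d → ℝ → ℝ) (w : List (Fin d)) : Fin (2*d-1) → ℝ :=
  fun m =>
    if h : (m : ℕ) < d then
      wordLen g ((⟨(m : ℕ), h⟩ : Fin d) :: w) / wordLen g w
    else
      (wordMap g w (g ⟨(m : ℕ) - d + 1, by have := m.isLt; omega⟩ 0)
        - wordMap g w (g ⟨(m : ℕ) - d, by have := m.isLt; omega⟩ 1)) / wordLen g w

/-- The open simplex `Simp_{2d-2} ⊆ (0,1)^{2d-1}` of vectors with coordinate sum `1`. -/
def Simp (d : ℕ) : Set (Fin (2*d-1) → ℝ) :=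
  {s | (∀ m, s m ∈ Set.Ioo (0:ℝ) 1) ∧ ∑ m, s m = 1}

/-- The initial word `j|_n = (j_1,…,j_n)` of a sequence `j ∈ Σ_d^dual = {1,…,d}^ℕ`. -/
def dword {d : ℕ} (j : ℕ → Fin d) (n : ℕ) : List (Fin d) :=
  List.ofFn (fun i : Fin n => j i)

/-- `S` is the scaling function of the system `g`:
`S(j) = lim_{n→∞} S_n(j|_n)` for every `j ∈ Σ_d^dual`. -/
def HasScalingFunction {d : ℕ} (g : Fin d → ℝ → ℝ) (S : (ℕ → Fin d) → Fin (2*d-1) → ℝ) : Prop :=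
  ∀ j : ℕ → Fin d,
    Filter.Tendsto (fun n => scalingData g (dword j n)) Filter.atTop (nhds (S j))

/-- `ρ_S(j,j')` where `n = #(j∩j')`:
`ρ_S(j,j') = sup_w ∏_{t=1}^{n} S((j_{t+1},…,j_n)·w)_{j_t}` (depends only on `j` and `n`). -/
def rhoS {d : ℕ} (S : (ℕ → Fin d) → Fin (2*d-1) → ℝ) (j : ℕ → Fin d) (n : ℕ) : ℝ :=
  ⨆ w : ℕ → Fin d, ∏ t ∈ Finset.range n,
    S (fun m => if t + 1 + m < n then j (t + 1 + m) else w (t + 1 + m - n))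
      ⟨((j t) : ℕ), by have := (j t).isLt; omega⟩

/-- Given a scaling vector `s ∈ Simp_{2d-2}`, the partition of `[0,1]` it determines has
`i`-th child interval starting at `childLeft s i = ∑_{m<i} (s_m + s_{d+m})`. -/
def childLeft {d : ℕ} (s : Fin (2*d-1) → ℝ) (i : Fin d) : ℝ :=
  ∑ m ∈ (Finset.range (i : ℕ)).attach,
    (s ⟨(m : ℕ), by have h := Finset.mem_range.mp m.2; have := i.isLt; omega⟩
      + s ⟨d + (m : ℕ), by have h := Finset.mem_range.mp m.2; have := i.isLt; omega⟩)

/-- The right endpoint of the `i`-th child interval of the partition determined by `s`. -/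
def childRight {d : ℕ} (s : Fin (2*d-1) → ℝ) (i : Fin d) : ℝ :=
  childLeft s i + s ⟨(i : ℕ), by have := i.isLt; omega⟩

/-- `A(j)`: the set of `2d` endpoints of the `d` child intervals of the partition of `[0,1]`
determined by the scaling vector `s = S(j)`. -/
def Apts {d : ℕ} (s : Fin (2*d-1) → ℝ) : Set ℝ :=
  ⋃ i : Fin d, {childLeft s i, childRight s i}

/-- An increasing `C^k` diffeomorphism of `[0,1]`. -/
structure IsDiffeo01 (k : ℕ) (φ : ℝ → ℝ) : Prop where
  smooth : ContDiffOn ℝ k φ I01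
  mono : StrictMonoOn φ I01
  deriv_pos : ∀ x ∈ I01, 0 < derivWithin φ I01 x
  bij : Set.BijOn φ I01 I01

/-- `D^k(A₁,A₂)`: increasing `C^k` diffeomorphisms of `[0,1]` mapping `A₁` onto `A₂`. -/
def Dk (k : ℕ) (A₁ A₂ : Set ℝ) : Set (ℝ → ℝ) :=
  {φ | IsDiffeo01 k φ ∧ φ '' A₁ = A₂}

/-- `D^k_var(M)(A₁,A₂)`: members of `D^k(A₁,A₂)` whose `k`-th derivative has variation `< M`. -/
def DkVar (k : ℕ) (M : ℝ) (A₁ A₂ : Set ℝ) : Set (ℝ → ℝ) :=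
  {φ | φ ∈ Dk k A₁ A₂ ∧ ∀ x ∈ I01, ∀ y ∈ I01,
    |iteratedDerivWithin k φ I01 x - iteratedDerivWithin k φ I01 y| < M}

/-- The renormalization `(L')⁻¹ ∘ φ ∘ L` of `φ`, where `L, L'` are the increasing affine
bijections from `[0,1]` onto `[a,b]` and `[a',b']` respectively. -/
def renorm (a b a' b' : ℝ) (φ : ℝ → ℝ) : ℝ → ℝ :=
  fun x => (φ (a + (b - a) * x) - a') / (b' - a')

/-- `R_{j₀} φ`: restrict `φ` to the `j₀`-th child interval of the partition determined by `s`
(mapped to the `j₀`-th child interval of the partition determined by `s'`) and renormalize. -/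
def Rmap {d : ℕ} (s s' : Fin (2*d-1) → ℝ) (j₀ : Fin d) (φ : ℝ → ℝ) : ℝ → ℝ :=
  renorm (childLeft s j₀) (childRight s j₀) (childLeft s' j₀) (childRight s' j₀) φ

/-- `j₀·j = (j₀, j_1, j_2, …)`. -/
def consSeq {d : ℕ} (j₀ : Fin d) (j : ℕ → Fin d) : ℕ → Fin d :=
  fun m => if m = 0 then j₀ else j (m - 1)

/-- The Cantor set of the system: `C = ⋂_{n ≥ 1} ⋃_{w of length n} I_w`. -/
def systemCantorSet {d : ℕ} (g : Fin d → ℝ → ℝ) : Set ℝ :=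
  ⋂ n : ℕ, ⋃ w ∈ {w : List (Fin d) | w.length = n + 1}, wordMap g w '' I01

end

/-!
The branches have derivatives bounded below by `λ > 0` and above by `Λ < 1`, and `ε`-Hölder
with constant `H`. By the mean value theorem, composing with one more branch multiplies the
ratio of the slopes of `G_v` on two subintervals of an interval `J` by at most
`exp (H / λ * |J|^ε)`, while `J` shrinks by the factor `Λ`; summing the geometric series gives
bounded distortion, with factor `exp (C |J|^ε)` for `C = H / (λ (1 - Λ^ε))`.

Every coordinate of `S_n(w ++ v)` is the relative length, inside `G_v(I_w)`, of the image of a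
fixed subinterval of `I_w`, so it differs from its value for `w ++ v'` by `O(|I_w|^ε)`. In the
limit, `|S(j) - S(j')| = O(|I_{j|p}|^ε)` when `j` and `j'` share their first `p` letters.
Finally, taking for `w` the continuation of `j` itself, the product defining `ρ_S(j, j')` is a
limit of telescoping products `|I_{j|N}| / |I_{(j_{p+1}, …, j_N)}|`, which bounded distortion
bounds below by `exp (-C) |I_{j|p}|`.
-/

open Real Topology

section

variable {d : ℕ} {ε : ℝ} {g : Fin d → ℝ → ℝ}

lemma abs_sub_one_le_exp_sub_one {q c : ℝ} (h₁ : exp (-c) ≤ q) (h₂ : q ≤ exp c) :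
    |q - 1| ≤ exp c - 1 := by
  rw [abs_le]
  constructor <;> linarith [add_one_le_exp c, add_one_le_exp (-c)]

lemma exp_mul_sub_one_le {C t : ℝ} (hC : 0 ≤ C) (ht₀ : 0 ≤ t) (ht₁ : t ≤ 1) :
    exp (C * t) - 1 ≤ C * exp C * t := by
  have h₁ : exp (C * t) * (1 - C * t) ≤ 1 := by
    calc exp (C * t) * (1 - C * t) ≤ exp (C * t) * exp (-(C * t)) := by
          gcongr
          linarith [add_one_le_exp (-(C * t))]
      _ = 1 := by rw [← exp_add, add_neg_cancel, exp_zero]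
  have h₂ : exp (C * t) ≤ exp C := exp_le_exp.2 (mul_le_of_le_one_right hC ht₁)
  nlinarith [mul_nonneg hC ht₀]

lemma slope_comp_of_ne {f h : ℝ → ℝ} {x y : ℝ} (hxy : x ≠ y) (hh : h x ≠ h y) :
    slope (f ∘ h) x y = slope f (h x) (h y) * slope h x y := by
  simp only [slope_def_field, Function.comp_apply]
  field_simp [sub_ne_zero.2 hxy, sub_ne_zero.2 hh.symm]

lemma StrictMonoOn.slope_comp_le {f h : ℝ → ℝ} {s t : Set ℝ} (hf : StrictMonoOn f t)
    (hh : StrictMonoOn h s) (hst : MapsTo h s t) {x y x' y' E₁ E₂ : ℝ} (hx : x ∈ s)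
    (hy : y ∈ s) (hxy : x < y) (hx' : x' ∈ s) (hy' : y' ∈ s) (hxy' : x' < y')
    (h₁ : slope f (h x) (h y) ≤ E₁ * slope f (h x') (h y'))
    (h₂ : slope h x y ≤ E₂ * slope h x' y') :
    slope (f ∘ h) x y ≤ E₁ * E₂ * slope (f ∘ h) x' y' := by
  have hhxy := hh hx hy hxy
  have hhxy' := hh hx' hy' hxy'
  rw [slope_comp_of_ne hxy.ne hhxy.ne, slope_comp_of_ne hxy'.ne hhxy'.ne, mul_mul_mul_comm]
  exact mul_le_mul h₁ h₂ (hh.slope_pos hx hy hxy.ne).le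
    ((hf.slope_pos (hst hx) (hst hy) hhxy.ne).le.trans h₁)

lemma wordMap_append (g : Fin d → ℝ → ℝ) (w v : List (Fin d)) (x : ℝ) :
    wordMap g (w ++ v) x = wordMap g v (wordMap g w x) := by
  induction w generalizing x with
  | nil => rfl
  | cons a w ih => exact ih (g a x)

lemma dword_add (j : ℕ → Fin d) (a b : ℕ) :
    dword j (a + b) = dword j a ++ dword (fun r => j (a + r)) b := by
  simp only [dword, List.ofFn_add]
  rfl

lemma scalingData_dword_shift (g : Fin d → ℝ → ℝ) (j : ℕ → Fin d) (t n : ℕ) :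
    scalingData g (dword (fun r => j (t + 1 + r)) n) (Fin.castLE (by omega) (j t))
      = wordLen g (dword (fun r => j (t + r)) (n + 1))
        / wordLen g (dword (fun r => j (t + 1 + r)) n) := by
  have hcons : dword (fun r => j (t + r)) (n + 1) = j t :: dword (fun r => j (t + 1 + r)) n := by
    simp only [dword, List.ofFn_succ, Fin.val_zero, add_zero, Fin.val_succ]
    congr 2
    ext i
    rw [add_comm (i : ℕ) 1, ← add_assoc]
  simp [scalingData, hcons]

namespace IsCantorSystem

lemma hasDerivAt (hg : IsCantorSystem 1 ε g) (i : Fin d) {x : ℝ} (hx : x ∈ Ioo 0 1) :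
    HasDerivAt (g i) (derivWithin (g i) I01 x) x := by
  have hmem : I01 ∈ 𝓝 x := Icc_mem_nhds hx.1 hx.2
  rw [derivWithin_of_mem_nhds hmem]
  exact ((hg.smooth i).differentiableOn one_ne_zero x (Ioo_subset_Icc_self hx)).differentiableAt
    hmem |>.hasDerivAt

lemma strictMonoOn (hg : IsCantorSystem 1 ε g) (i : Fin d) : StrictMonoOn (g i) I01 := by
  refine strictMonoOn_of_hasDerivWithinAt_pos (convex_Icc 0 1) (hg.smooth i).continuousOn
    (fun x hx => ?_) (fun x hx => ?_) (f' := derivWithin (g i) I01) <;> rw [interior_Icc] at hx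
  · exact (hg.hasDerivAt i hx).hasDerivWithinAt
  · exact hg.deriv_pos i x (Ioo_subset_Icc_self hx)

lemma exists_slope_eq_derivWithin (hg : IsCantorSystem 1 ε g) (i : Fin d) {x y : ℝ}
    (hx : 0 ≤ x) (hxy : x < y) (hy : y ≤ 1) :
    ∃ ξ ∈ Ioo x y, slope (g i) x y = derivWithin (g i) I01 ξ := by
  obtain ⟨ξ, hξ, h⟩ := exists_hasDerivAt_eq_slope (g i) (derivWithin (g i) I01) hxy
    ((hg.smooth i).continuousOn.mono (Icc_subset_Icc hx hy))
    (fun z hz => hg.hasDerivAt i ⟨hx.trans_lt hz.1, hz.2.trans_le hy⟩)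
  exact ⟨ξ, hξ, by rw [slope_def_field, h]⟩

lemma mapsTo_wordMap (hg : IsCantorSystem 1 ε g) (w : List (Fin d)) :
    MapsTo (wordMap g w) I01 I01 := by
  induction w with
  | nil => exact mapsTo_id _
  | cons a w ih => exact ih.comp (hg.maps a)

lemma strictMonoOn_wordMap (hg : IsCantorSystem 1 ε g) (w : List (Fin d)) :
    StrictMonoOn (wordMap g w) I01 := by
  induction w with
  | nil => exact strictMonoOn_id
  | cons a w ih => exact ih.comp (hg.strictMonoOn a) (hg.maps a)

lemma wordLen_pos (hg : IsCantorSystem 1 ε g) (w : List (Fin d)) : 0 < wordLen g w :=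
  sub_pos.2 (hg.strictMonoOn_wordMap w (left_mem_Icc.2 zero_le_one)
    (right_mem_Icc.2 zero_le_one) one_pos)

lemma wordLen_le_one (hg : IsCantorSystem 1 ε g) (w : List (Fin d)) : wordLen g w ≤ 1 := by
  have h0 := hg.mapsTo_wordMap w (left_mem_Icc.2 zero_le_one)
  have h1 := hg.mapsTo_wordMap w (right_mem_Icc.2 zero_le_one)
  unfold wordLen
  linarith [h0.1, h1.2]

lemma exists_scalingData_eq (hg : IsCantorSystem 1 ε g) (m : Fin (2 * d - 1)) :
    ∃ a b, 0 ≤ a ∧ a < b ∧ b ≤ 1 ∧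
      ∀ w, scalingData g w m = (wordMap g w b - wordMap g w a) / wordLen g w := by
  have h₀ : (0 : ℝ) ∈ I01 := left_mem_Icc.2 zero_le_one
  have h₁ : (1 : ℝ) ∈ I01 := right_mem_Icc.2 zero_le_one
  -- a ratio coordinate comes from `g i [0,1]`, a gap coordinate from `[g i 1, g (i + 1) 0]`
  by_cases h : (m : ℕ) < d
  · exact ⟨_, _, (hg.maps _ h₀).1, hg.strictMonoOn ⟨m, h⟩ h₀ h₁ one_pos, (hg.maps _ h₁).2,
      fun w => by simp only [scalingData, dif_pos h, wordLen, wordMap]⟩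
  · exact ⟨_, _, (hg.maps _ h₁).1, hg.ordered ⟨m - d, by omega⟩ ⟨m - d + 1, by omega⟩
      (by simp [Fin.lt_def]), (hg.maps _ h₀).2, fun w => by simp only [scalingData, dif_neg h]⟩

lemma scalingData_mem_Icc (hg : IsCantorSystem 1 ε g) (w : List (Fin d))
    (m : Fin (2 * d - 1)) : scalingData g w m ∈ Icc 0 1 := by
  obtain ⟨a, b, ha, hab, hb, h⟩ := hg.exists_scalingData_eq m
  have hmono := (hg.strictMonoOn_wordMap w).monotoneOn
  have h₀ : (0 : ℝ) ∈ I01 := left_mem_Icc.2 zero_le_one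
  have h₁ : (1 : ℝ) ∈ I01 := right_mem_Icc.2 zero_le_one
  have ha₁ : a ∈ I01 := ⟨ha, hab.le.trans hb⟩
  have hb₁ : b ∈ I01 := ⟨ha.trans hab.le, hb⟩
  rw [h, mem_Icc, div_le_one (hg.wordLen_pos w), wordLen]
  exact ⟨div_nonneg (sub_nonneg.2 (hmono ha₁ hb₁ hab.le)) (hg.wordLen_pos w).le,
    by linarith [hmono h₀ ha₁ ha, hmono hb₁ h₁ hb]⟩

lemma prod_scalingData_dword_shift (hg : IsCantorSystem 1 ε g) (j : ℕ → Fin d)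
    {p N : ℕ} (hpN : p ≤ N) :
    ∏ t ∈ Finset.range p,
        scalingData g (dword (fun r => j (t + 1 + r)) (N - (t + 1))) (Fin.castLE (by omega) (j t))
      = wordLen g (dword j N) / wordLen g (dword (fun r => j (p + r)) (N - p)) := by
  set L : ℕ → ℝ := fun t => wordLen g (dword (fun r => j (t + r)) (N - t))
  have hL : ∀ t, L t ≠ 0 := fun t => (hg.wordLen_pos _).ne'
  have hL₀ : L 0 = wordLen g (dword j N) := by simp [L]
  rw [← hL₀]
  refine Finset.prod_range_induction _ (fun n => L 0 / L n) (div_self (hL 0)) p fun t ht => ?_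
  have hNt : N - (t + 1) + 1 = N - t := by omega
  rw [scalingData_dword_shift, hNt]
  change L 0 / L (t + 1) = L 0 / L t * (L t / L (t + 1))
  field_simp [hL t, hL (t + 1)]

end IsCantorSystem

structure UniformDerivBounds (g : Fin d → ℝ → ℝ) (ε lam Lam H : ℝ) : Prop where
  lam_pos : 0 < lam
  Lam_mem : Lam ∈ Ioo 0 1
  H_pos : 0 < H
  le_deriv : ∀ i, ∀ x ∈ I01, lam ≤ derivWithin (g i) I01 x
  deriv_le : ∀ i, ∀ x ∈ I01, derivWithin (g i) I01 x ≤ Lam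
  holder : ∀ i, HolderBoundOn01 ε H (derivWithin (g i) I01)

def HasBoundedDistortion (g : Fin d → ℝ → ℝ) (ε C : ℝ) : Prop :=
  ∀ (v : List (Fin d)) {A B x y x' y' : ℝ}, 0 ≤ A → B ≤ 1 →
    A ≤ x → x < y → y ≤ B → A ≤ x' → x' < y' → y' ≤ B →
    slope (wordMap g v) x y ≤ exp (C * (B - A) ^ ε) * slope (wordMap g v) x' y'

lemma IsCantorSystem.exists_uniformDerivBounds (hg : IsCantorSystem 1 ε g) :
    ∃ lam Lam H, UniformDerivBounds g ε lam Lam H := by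
  have hcont (i : Fin d) : ContinuousOn (derivWithin (g i) I01) I01 :=
    (hg.smooth i).continuousOn_derivWithin uniqueDiffOn_Icc_zero_one le_rfl
  have hlam : ∀ᶠ c in 𝓝[>] (0 : ℝ), ∀ i, ∀ x ∈ I01, c ≤ derivWithin (g i) I01 x := by
    refine eventually_all.2 fun i => ?_
    obtain ⟨a, ha, hle⟩ := isCompact_Icc.exists_forall_le' (hcont i) (hg.deriv_pos i)
    filter_upwards [Ioo_mem_nhdsGT ha] with c hc x hx using hc.2.le.trans (hle x hx)
  have hLam : ∀ᶠ c in 𝓝[<] (1 : ℝ), ∀ i, ∀ x ∈ I01, derivWithin (g i) I01 x ≤ c := by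
    refine eventually_all.2 fun i => ?_
    obtain ⟨x₀, hx₀, hmax⟩ := isCompact_Icc.exists_isMaxOn (nonempty_Icc.2 zero_le_one) (hcont i)
    filter_upwards [Ioo_mem_nhdsLT (hg.deriv_lt_one i x₀ hx₀)] with c hc x hx
      using (hmax hx).trans hc.1.le
  have hH : ∀ᶠ c in atTop, ∀ i, HolderBoundOn01 ε c (derivWithin (g i) I01) := by
    refine eventually_all.2 fun i => ?_
    obtain ⟨H, -, hH⟩ := hg.holder i
    filter_upwards [eventually_ge_atTop H] with c hc x hx y hy
    rw [← iteratedDerivWithin_one]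
    exact (hH x hx y hy).trans (by gcongr)
  obtain ⟨lam, hlam, hlam0⟩ := (hlam.and self_mem_nhdsWithin).exists
  obtain ⟨Lam, hLam, hLam1⟩ := (hLam.and (Ioo_mem_nhdsLT one_pos)).exists
  obtain ⟨H, hH, hH0⟩ := (hH.and (eventually_gt_atTop 0)).exists
  exact ⟨lam, Lam, H, hlam0, hLam1, hH0, hlam, hLam, hH⟩

namespace UniformDerivBounds

variable {lam Lam H : ℝ}

lemma slope_le_exp_mul_slope (hb : UniformDerivBounds g ε lam Lam H) (hg : IsCantorSystem 1 ε g)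
    (hε : 0 < ε) (a : Fin d) {A B x y x' y' : ℝ} (hA : 0 ≤ A) (hB : B ≤ 1)
    (hx : A ≤ x) (hxy : x < y) (hy : y ≤ B) (hx' : A ≤ x') (hxy' : x' < y') (hy' : y' ≤ B) :
    slope (g a) x y ≤ exp (H / lam * (B - A) ^ ε) * slope (g a) x' y' := by
  obtain ⟨ξ, hξ, hslope⟩ := hg.exists_slope_eq_derivWithin a (hA.trans hx) hxy (hy.trans hB)
  obtain ⟨ξ', hξ', hslope'⟩ :=
    hg.exists_slope_eq_derivWithin a (hA.trans hx') hxy' (hy'.trans hB)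
  have hξI : ξ ∈ I01 := ⟨by linarith [hξ.1], by linarith [hξ.2]⟩
  have hξI' : ξ' ∈ I01 := ⟨by linarith [hξ'.1], by linarith [hξ'.2]⟩
  set D := derivWithin (g a) I01 ξ'
  have hD : lam ≤ D := hb.le_deriv a ξ' hξI'
  have ht : 0 ≤ (B - A) ^ ε := rpow_nonneg (by linarith) ε
  have hdist : |ξ - ξ'| ^ ε ≤ (B - A) ^ ε := by
    gcongr
    rw [abs_le]
    constructor <;> linarith [hξ.1, hξ.2, hξ'.1, hξ'.2]
  rw [hslope, hslope']
  calc derivWithin (g a) I01 ξ ≤ D + H * (B - A) ^ ε := by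
        linarith [(abs_le.1 (hb.holder a ξ hξI ξ' hξI')).2,
          mul_le_mul_of_nonneg_left hdist hb.H_pos.le]
    _ ≤ D * (1 + H / lam * (B - A) ^ ε) := by
        have : H * (B - A) ^ ε ≤ D * (H / lam * (B - A) ^ ε) :=
          calc H * (B - A) ^ ε = lam * (H / lam * (B - A) ^ ε) := by
                field_simp [hb.lam_pos.ne']
            _ ≤ D * (H / lam * (B - A) ^ ε) := by
                have := hb.lam_pos; have := hb.H_pos
                gcongr
        linarith
    _ ≤ exp (H / lam * (B - A) ^ ε) * D := by
        rw [mul_comm]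
        gcongr
        · linarith [hb.lam_pos]
        · linarith [add_one_le_exp (H / lam * (B - A) ^ ε)]

lemma sub_le_mul_sub (hb : UniformDerivBounds g ε lam Lam H) (hg : IsCantorSystem 1 ε g)
    (a : Fin d) {A B : ℝ} (hA : 0 ≤ A) (hAB : A ≤ B) (hB : B ≤ 1) :
    g a B - g a A ≤ Lam * (B - A) := by
  rcases hAB.eq_or_lt with rfl | hAB
  · simp
  obtain ⟨ξ, hξ, hslope⟩ := hg.exists_slope_eq_derivWithin a hA hAB hB
  rw [slope_def_field, div_eq_iff (sub_pos.2 hAB).ne'] at hslope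
  rw [hslope]
  exact mul_le_mul_of_nonneg_right (hb.deriv_le a ξ ⟨by linarith [hξ.1], by linarith [hξ.2]⟩)
    (by linarith)

lemma exp_mul_rpow_mul_exp_le (hb : UniformDerivBounds g ε lam Lam H)
    (hg : IsCantorSystem 1 ε g) (hε : 0 < ε) (a : Fin d) {A B : ℝ} (hA : 0 ≤ A) (hAB : A ≤ B)
    (hB : B ≤ 1) :
    exp (H / lam / (1 - Lam ^ ε) * (g a B - g a A) ^ ε) * exp (H / lam * (B - A) ^ ε)
      ≤ exp (H / lam / (1 - Lam ^ ε) * (B - A) ^ ε) := by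
  set C := H / lam / (1 - Lam ^ ε)
  have hLamε : Lam ^ ε < 1 := rpow_lt_one hb.Lam_mem.1.le hb.Lam_mem.2 hε
  have hC : 0 ≤ C := div_nonneg (div_nonneg hb.H_pos.le hb.lam_pos.le) (by linarith)
  -- `C` is the fixed point of `c ↦ c Λ^ε + H/λ`, which is what makes the induction close
  have hCfix : C * Lam ^ ε + H / lam = C := by
    simp only [C]
    field_simp [(sub_pos.2 hLamε).ne']
    ring
  have hmono := (hg.strictMonoOn a).monotoneOn
  have hcontr : (g a B - g a A) ^ ε ≤ Lam ^ ε * (B - A) ^ ε := by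
    rw [← mul_rpow hb.Lam_mem.1.le (by linarith)]
    exact rpow_le_rpow (sub_nonneg.2 (hmono ⟨hA, hAB.trans hB⟩ ⟨hA.trans hAB, hB⟩ hAB))
      (hb.sub_le_mul_sub hg a hA hAB hB) hε.le
  rw [← exp_add, exp_le_exp]
  calc C * (g a B - g a A) ^ ε + H / lam * (B - A) ^ ε
      ≤ C * (Lam ^ ε * (B - A) ^ ε) + H / lam * (B - A) ^ ε := by gcongr
    _ = C * (B - A) ^ ε := by linear_combination (B - A) ^ ε * hCfix

lemma hasBoundedDistortion (hb : UniformDerivBounds g ε lam Lam H) (hg : IsCantorSystem 1 ε g)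
    (hε : 0 < ε) : HasBoundedDistortion g ε (H / lam / (1 - Lam ^ ε)) := by
  set C := H / lam / (1 - Lam ^ ε)
  have hC : 0 ≤ C := div_nonneg (div_nonneg hb.H_pos.le hb.lam_pos.le)
    (sub_nonneg.2 (rpow_le_one hb.Lam_mem.1.le hb.Lam_mem.2.le hε.le))
  intro v
  induction v with
  | nil =>
    intro A B x y x' y' _ _ hx hxy hy _ hxy' _
    simp only [wordMap, slope_def_field, id, div_self (sub_pos.2 hxy).ne',
      div_self (sub_pos.2 hxy').ne', mul_one]
    exact one_le_exp (mul_nonneg hC (rpow_nonneg (by linarith) ε))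
  | cons a v ih =>
    intro A B x y x' y' hA hB hx hxy hy hx' hxy' hy'
    have mem {z : ℝ} (h1 : A ≤ z) (h2 : z ≤ B) : z ∈ I01 := ⟨hA.trans h1, h2.trans hB⟩
    have hAB : A ≤ B := hx.trans (hxy.le.trans hy)
    have hA₁ := mem le_rfl hAB
    have hB₁ := mem hAB le_rfl
    have hx₁ := mem hx (hxy.le.trans hy)
    have hy₁ := mem (hx.trans hxy.le) hy
    have hx₁' := mem hx' (hxy'.le.trans hy')
    have hy₁' := mem (hx'.trans hxy'.le) hy'
    have hmono := (hg.strictMonoOn a).monotoneOn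
    have hgxy := hg.strictMonoOn a hx₁ hy₁ hxy
    have hgxy' := hg.strictMonoOn a hx₁' hy₁' hxy'
    have hv := ih (hg.maps a hA₁).1 (hg.maps a hB₁).2 (hmono hA₁ hx₁ hx) hgxy (hmono hy₁ hB₁ hy)
      (hmono hA₁ hx₁' hx') hgxy' (hmono hy₁' hB₁ hy')
    have ha := hb.slope_le_exp_mul_slope hg hε a hA hB hx hxy hy hx' hxy' hy'
    have hexp := hb.exp_mul_rpow_mul_exp_le hg hε a hA hAB hB
    exact ((hg.strictMonoOn_wordMap v).slope_comp_le (hg.strictMonoOn a) (hg.maps a)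
      hx₁ hy₁ hxy hx₁' hy₁' hxy' hv ha).trans (mul_le_mul_of_nonneg_right hexp
        ((hg.strictMonoOn_wordMap (a :: v)).slope_pos hx₁' hy₁' hxy'.ne).le)

end UniformDerivBounds

lemma IsCantorSystem.exists_hasBoundedDistortion (hg : IsCantorSystem 1 ε g) (hε : 0 < ε) :
    ∃ C, 0 < C ∧ HasBoundedDistortion g ε C := by
  obtain ⟨lam, Lam, H, hb⟩ := hg.exists_uniformDerivBounds
  exact ⟨_, div_pos (div_pos hb.H_pos hb.lam_pos)
    (sub_pos.2 (rpow_lt_one hb.Lam_mem.1.le hb.Lam_mem.2 hε)), hb.hasBoundedDistortion hg hε⟩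

namespace HasBoundedDistortion

variable {C : ℝ}

lemma abs_div_sub_div_le (hD : HasBoundedDistortion g ε C) (hg : IsCantorSystem 1 ε g)
    (v : List (Fin d)) {A B α β : ℝ} (hA : 0 ≤ A) (hα : A ≤ α) (hαβ : α < β) (hβ : β ≤ B)
    (hB : B ≤ 1) :
    |(wordMap g v β - wordMap g v α) / (wordMap g v B - wordMap g v A) - (β - α) / (B - A)|
      ≤ exp (C * (B - A) ^ ε) - 1 := by
  have hAB : A < B := hα.trans_lt (hαβ.trans_le hβ)
  have hmono := hg.strictMonoOn_wordMap v
  have hαβ₁ : slope (wordMap g v) α β ≤ exp (C * (B - A) ^ ε) * slope (wordMap g v) A B :=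
    hD v hA hB hα hαβ hβ le_rfl hAB le_rfl
  have hAB₁ : slope (wordMap g v) A B ≤ exp (C * (B - A) ^ ε) * slope (wordMap g v) α β :=
    hD v hA hB le_rfl hAB le_rfl hα hαβ hβ
  set q := slope (wordMap g v) α β / slope (wordMap g v) A B
  have hsAB : 0 < slope (wordMap g v) A B :=
    hmono.slope_pos ⟨hA, hAB.le.trans hB⟩ ⟨hA.trans hAB.le, hB⟩ hAB.ne
  have hq : |q - 1| ≤ exp (C * (B - A) ^ ε) - 1 := by
    refine abs_sub_one_le_exp_sub_one ?_ ((div_le_iff₀ hsAB).2 hαβ₁)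
    rw [le_div_iff₀ hsAB, exp_neg, inv_mul_le_iff₀ (exp_pos _)]
    exact hAB₁
  have hr₀ : 0 < (β - α) / (B - A) := div_pos (by linarith) (by linarith)
  have hr₁ : (β - α) / (B - A) ≤ 1 := (div_le_one (by linarith)).2 (by linarith)
  have hratio : (wordMap g v β - wordMap g v α) / (wordMap g v B - wordMap g v A)
      = (β - α) / (B - A) * q := by
    simp only [q, slope_def_field]
    field_simp [(sub_pos.2 hAB).ne', (sub_pos.2 hαβ).ne', hsAB.ne']
  rw [hratio, ← mul_sub_one, abs_mul, abs_of_pos hr₀]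
  exact (mul_le_of_le_one_left (abs_nonneg _) hr₁).trans hq

lemma wordLen_mul_wordLen_le (hD : HasBoundedDistortion g ε C) (hg : IsCantorSystem 1 ε g)
    (w v : List (Fin d)) : wordLen g v * wordLen g w ≤ exp C * wordLen g (w ++ v) := by
  have h₀ := hg.mapsTo_wordMap w (left_mem_Icc.2 zero_le_one)
  have h₁ := hg.mapsTo_wordMap w (right_mem_Icc.2 zero_le_one)
  have h := hD v le_rfl le_rfl le_rfl one_pos le_rfl h₀.1
    (sub_pos.1 (hg.wordLen_pos w)) h₁.2
  have hw := hg.wordLen_pos w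
  simp only [sub_zero, one_rpow, mul_one, slope_def_field, div_one] at h
  simp only [wordLen, wordMap_append] at hw ⊢
  rwa [mul_div_assoc', le_div_iff₀ hw] at h

lemma abs_scalingData_append_sub_le (hD : HasBoundedDistortion g ε C)
    (hg : IsCantorSystem 1 ε g) (hε : 0 < ε) (hC : 0 ≤ C) (w v v' : List (Fin d))
    (m : Fin (2 * d - 1)) :
    |scalingData g (w ++ v) m - scalingData g (w ++ v') m|
      ≤ 2 * (C * exp C * wordLen g w ^ ε) := by
  obtain ⟨a, b, ha, hab, hb, h⟩ := hg.exists_scalingData_eq m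
  have hmono := hg.strictMonoOn_wordMap w
  have h₀ : (0 : ℝ) ∈ I01 := left_mem_Icc.2 zero_le_one
  have h₁ : (1 : ℝ) ∈ I01 := right_mem_Icc.2 zero_le_one
  have ha₁ : a ∈ I01 := ⟨ha, hab.le.trans hb⟩
  have hb₁ : b ∈ I01 := ⟨ha.trans hab.le, hb⟩
  have hclose (u : List (Fin d)) :
      |scalingData g (w ++ u) m - (wordMap g w b - wordMap g w a) / wordLen g w|
        ≤ C * exp C * wordLen g w ^ ε := by
    rw [h, wordLen, wordMap_append, wordMap_append, wordMap_append, wordMap_append]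
    refine (hD.abs_div_sub_div_le hg u (hg.mapsTo_wordMap w h₀).1
      (hmono.monotoneOn h₀ ha₁ ha) (hmono ha₁ hb₁ hab) (hmono.monotoneOn hb₁ h₁ hb)
      (hg.mapsTo_wordMap w h₁).2).trans ?_
    exact exp_mul_sub_one_le hC (rpow_nonneg (hg.wordLen_pos w).le ε)
      (rpow_le_one (hg.wordLen_pos w).le (hg.wordLen_le_one w) hε.le)
  linarith [abs_sub_le (scalingData g (w ++ v) m)
    ((wordMap g w b - wordMap g w a) / wordLen g w) (scalingData g (w ++ v') m),
    abs_sub_comm (scalingData g (w ++ v') m) ((wordMap g w b - wordMap g w a) / wordLen g w),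
    hclose v, hclose v']

lemma exp_neg_mul_wordLen_le_prod (hD : HasBoundedDistortion g ε C)
    (hg : IsCantorSystem 1 ε g) (j : ℕ → Fin d) {p N : ℕ} (hpN : p ≤ N) :
    exp (-C) * wordLen g (dword j p) ≤ ∏ t ∈ Finset.range p,
        scalingData g (dword (fun r => j (t + 1 + r)) (N - (t + 1))) (Fin.castLE (by omega) (j t)) := by
  set v := dword (fun r => j (p + r)) (N - p)
  have hN : dword j N = dword j p ++ v := by rw [← dword_add, Nat.add_sub_cancel' hpN]
  rw [hg.prod_scalingData_dword_shift j hpN, le_div_iff₀ (hg.wordLen_pos v), exp_neg,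
    inv_mul_eq_div, div_mul_eq_mul_div, div_le_iff₀ (exp_pos C), mul_comm _ (exp C), hN]
  exact (mul_comm _ _).trans_le (hD.wordLen_mul_wordLen_le hg (dword j p) v)

end HasBoundedDistortion

namespace HasScalingFunction

variable {S : (ℕ → Fin d) → Fin (2 * d - 1) → ℝ} {C : ℝ}

lemma mem_Icc (hS : HasScalingFunction g S) (hg : IsCantorSystem 1 ε g) (j : ℕ → Fin d)
    (m : Fin (2 * d - 1)) : S j m ∈ Icc 0 1 :=
  isClosed_Icc.mem_of_tendsto (tendsto_pi_nhds.1 (hS j) m)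
    (Eventually.of_forall fun _ => hg.scalingData_mem_Icc _ m)

lemma abs_sub_le (hS : HasScalingFunction g S) (hD : HasBoundedDistortion g ε C)
    (hg : IsCantorSystem 1 ε g) (hε : 0 < ε) (hC : 0 ≤ C) {j j' : ℕ → Fin d} {p : ℕ}
    (hjj' : ∀ t < p, j t = j' t) (m : Fin (2 * d - 1)) :
    |S j m - S j' m| ≤ 2 * (C * exp C * wordLen g (dword j p) ^ ε) := by
  have hp : dword j' p = dword j p :=
    congrArg List.ofFn (funext fun i => (hjj' i i.isLt).symm)
  refine le_of_tendsto (((tendsto_pi_nhds.1 (hS j) m).sub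
    (tendsto_pi_nhds.1 (hS j') m)).abs.comp (tendsto_add_atTop_nat p)) (Eventually.of_forall
      fun n => ?_)
  simp only [Function.comp_apply]
  rw [add_comm n p, dword_add, dword_add, hp]
  exact hD.abs_scalingData_append_sub_le hg hε hC _ _ _ m

lemma prod_le_rhoS (hS : HasScalingFunction g S) (hg : IsCantorSystem 1 ε g) (j : ℕ → Fin d)
    (p : ℕ) :
    ∏ t ∈ Finset.range p, S (fun r => j (t + 1 + r)) (Fin.castLE (by omega) (j t))
      ≤ rhoS S j p := by
  have hbdd : BddAbove (range fun w : ℕ → Fin d => ∏ t ∈ Finset.range p,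
      S (fun r => if t + 1 + r < p then j (t + 1 + r) else w (t + 1 + r - p))
        (Fin.castLE (by omega) (j t))) :=
    ⟨1, forall_mem_range.2 fun w => Finset.prod_le_one (fun t _ => (hS.mem_Icc hg _ _).1)
      (fun t _ => (hS.mem_Icc hg _ _).2)⟩
  refine le_of_eq_of_le (Finset.prod_congr rfl fun t ht => ?_) (le_ciSup hbdd fun r => j (p + r))
  congr 1
  funext r
  split_ifs with h
  · rfl
  · exact congrArg j (by omega : t + 1 + r = p + (t + 1 + r - p))

lemma wordLen_le_exp_mul_rhoS (hS : HasScalingFunction g S) (hD : HasBoundedDistortion g ε C)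
    (hg : IsCantorSystem 1 ε g) (j : ℕ → Fin d) (p : ℕ) :
    wordLen g (dword j p) ≤ exp C * rhoS S j p := by
  have hprod : Tendsto (fun N => ∏ t ∈ Finset.range p, scalingData g
        (dword (fun r => j (t + 1 + r)) (N - (t + 1))) (Fin.castLE (by omega) (j t))) atTop
      (𝓝 (∏ t ∈ Finset.range p, S (fun r => j (t + 1 + r)) (Fin.castLE (by omega) (j t)))) :=
    tendsto_finsetProd _ fun t _ =>
      (tendsto_pi_nhds.1 (hS _) _).comp (tendsto_sub_atTop_nat (t + 1))
  have hlow := ge_of_tendsto hprod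
    ((eventually_ge_atTop p).mono fun N hN => hD.exp_neg_mul_wordLen_le_prod hg j hN)
  rw [← div_le_iff₀' (exp_pos C), div_eq_inv_mul, ← exp_neg]
  exact hlow.trans (hS.prod_le_rhoS hg j p)

end HasScalingFunction

end

theorem stmt9_general (d : ℕ) (ε : ℝ) (hε : ε ∈ Set.Ioc (0:ℝ) 1)
    (g : Fin d → ℝ → ℝ) (hg : IsCantorSystem 1 ε g)
    (S : (ℕ → Fin d) → Fin (2*d-1) → ℝ) (hS : HasScalingFunction g S) :
    ∃ K > 0, ∀ j j' : ℕ → Fin d, ∀ p : ℕ,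
      (∀ t < p, j t = j' t) → j p ≠ j' p →
      ∀ m, |S j m - S j' m| ≤ K * rhoS S j p ^ ε := by
  obtain ⟨C, hC, hD⟩ := hg.exists_hasBoundedDistortion hε.1
  refine ⟨2 * (C * exp C) * exp (C * ε), by positivity, fun j j' p hjj' _ m => ?_⟩
  have hlen := hS.wordLen_le_exp_mul_rhoS hD hg j p
  have hlen₀ := hg.wordLen_pos (dword j p)
  have hρ : 0 ≤ rhoS S j p := nonneg_of_mul_nonneg_right (hlen₀.le.trans hlen) (exp_pos C)
  calc |S j m - S j' m| ≤ 2 * (C * exp C * wordLen g (dword j p) ^ ε) :=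
        hS.abs_sub_le hD hg hε.1 hC.le hjj' m
    _ ≤ 2 * (C * exp C * (exp C * rhoS S j p) ^ ε) := by
        gcongr
        exact hε.1.le
    _ = 2 * (C * exp C) * exp (C * ε) * rhoS S j p ^ ε := by
        rw [mul_rpow (exp_pos C).le hρ, ← exp_mul]
        ring

/-- Theorem 1, necessity: the scaling function of a `C^{1+ε}` Cantor system is
`C^ε` with respect to the metric `ρ_S`: `|S(j) - S(j')|_∞ ≤ K ρ_S(j,j')^ε`. -/
theorem stmt9 (d : ℕ) (hd : 2 ≤ d) (ε : ℝ) (hε : ε ∈ Set.Ioc (0:ℝ) 1)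
    (g : Fin d → ℝ → ℝ) (hg : IsCantorSystem 1 ε g)
    (S : (ℕ → Fin d) → Fin (2*d-1) → ℝ) (hS : HasScalingFunction g S) :
    ∃ K > 0, ∀ j j' : ℕ → Fin d, ∀ p : ℕ,
      (∀ t < p, j t = j' t) → j p ≠ j' p →
      ∀ m, |S j m - S j' m| ≤ K * rhoS S j p ^ ε :=
  stmt9_general d ε hε g hg S hS
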